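/- Let Γ be a directed graph with hereditary subsets H₁ and H₃, and let v be a vertex with index 1 relative to H₁, index 1 relative to H₃, and index 0 relative to H₁ ∪ H₃. Then there exist distinct edges e, f with source v such that r(e) ∈ H₁ \ H₃ and r(f) ∈ H₃ \ H₁, and every other edge g with source v satisfies r(g) ∈ H₁ ∩ H₃; consequently v is a forked vertex. -/

import Mathlib

/-- A subset `H` of the vertices is hereditary if `s(e) ∈ H` implies
`r(e) ∈ H` for every edge `e`. -/
def Hereditary {V E : Type*} (s r : E → V) (H : Set V) : Prop :=
  ∀ e : E, s e ∈ H → r e ∈ H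

/-- The index of a vertex `v` relative to `H`: the number of edges with
source `v` and range outside `H`. -/
noncomputable def indexRel {V E : Type*} (s r : E → V) (H : Set V) (v : V) : ℕ :=
  Set.ncard {e : E | s e = v ∧ r e ∉ H}

/-- `Reaches s r u w` means there is a directed path (possibly trivial)
from `u` to `w`. -/
def Reaches {V E : Type*} (s r : E → V) : V → V → Prop :=
  Relation.ReflTransGen (fun u w => ∃ e : E, s e = u ∧ r e = w)

/-- A vertex `v` is forked if there are distinct edges `e, f` with source `v`
such that `r(g) ⋭ r(e)` for all `g ∈ s⁻¹(v) \ {e}` and `r(g) ⋭ r(f)` for all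
`g ∈ s⁻¹(v) \ {f}`. -/
def Forked {V E : Type*} (s r : E → V) (v : V) : Prop :=
  ∃ e f : E, e ≠ f ∧ s e = v ∧ s f = v ∧
    (∀ g : E, s g = v → g ≠ e → ¬ Reaches s r (r g) (r e)) ∧
    (∀ g : E, s g = v → g ≠ f → ¬ Reaches s r (r g) (r f))

/-! Each of the two index-one conditions singles out one edge leaving `v` whose range escapes the
corresponding hereditary set, and the index-zero condition forces these two edges to differ. Since
hereditary sets are closed under reachability, no other edge leaving `v` can reach the range of
either of them. -/

section

variable {V E : Type*} {s r : E → V} {H H' : Set V} {v : V}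

theorem Hereditary.mem_of_reaches (hH : Hereditary s r H) {u w : V} (hu : u ∈ H)
    (huw : Reaches s r u w) : w ∈ H := by
  induction huw with
  | refl => exact hu
  | tail _ hstep ih =>
    obtain ⟨e, rfl, rfl⟩ := hstep
    exact hH e ih

theorem exists_edge_of_indexRel_eq_one (h : indexRel s r H v = 1) :
    ∃ e, s e = v ∧ r e ∉ H ∧ ∀ g, s g = v → g ≠ e → r g ∈ H := by
  obtain ⟨e, he⟩ := Set.ncard_eq_one.mp h
  have hmem : ∀ g, g ∈ {g : E | s g = v ∧ r g ∉ H} ↔ g = e := fun g => by rw [he]; rfl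
  refine ⟨e, ((hmem e).mpr rfl).1, ((hmem e).mpr rfl).2, fun g hg hge => ?_⟩
  by_contra hgH
  exact hge ((hmem g).mp ⟨hg, hgH⟩)

/-- `Set.ncard` is `0` on infinite sets: the finiteness needed here comes from
`indexRel s r H v ≠ 0`. -/
theorem range_mem_of_indexRel_eq_zero (hHH' : H ⊆ H') (hH : indexRel s r H v ≠ 0)
    (hH' : indexRel s r H' v = 0) {e : E} (he : s e = v) : r e ∈ H' := by
  have hfin : {g : E | s g = v ∧ r g ∉ H'}.Finite :=
    (Set.finite_of_ncard_ne_zero hH).subset fun g hg => ⟨hg.1, fun hgH => hg.2 (hHH' hgH)⟩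
  by_contra heH'
  have hempty := (Set.ncard_eq_zero hfin).mp hH'
  exact hempty.subset ⟨he, heH'⟩

theorem forked_of_hereditary (hH : Hereditary s r H) (hH' : Hereditary s r H') {e f : E}
    (hef : e ≠ f) (he : s e = v) (hf : s f = v)
    (heH : r e ∉ H) (hH_others : ∀ g, s g = v → g ≠ e → r g ∈ H)
    (hfH' : r f ∉ H') (hH'_others : ∀ g, s g = v → g ≠ f → r g ∈ H') :
    Forked s r v :=
  ⟨e, f, hef, he, hf,
    fun g hg hge hreach => heH (hH.mem_of_reaches (hH_others g hg hge) hreach),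
    fun g hg hgf hreach => hfH' (hH'.mem_of_reaches (hH'_others g hg hgf) hreach)⟩

end

/-- If `H₁, H₃` are hereditary and `v` has index `1` relative to `H₁`, index
`1` relative to `H₃`, and index `0` relative to `H₁ ∪ H₃`, then there are
distinct edges `e, f` with source `v` such that `r(e) ∈ H₁ \ H₃`,
`r(f) ∈ H₃ \ H₁`, every other edge `g` with source `v` has `r(g) ∈ H₁ ∩ H₃`,
and consequently `v` is a forked vertex. -/
theorem forked_of_indices {V E : Type*} (s r : E → V) (H₁ H₃ : Set V) (v : V)
    (hh₁ : Hereditary s r H₁) (hh₃ : Hereditary s r H₃)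
    (h₁ : indexRel s r H₁ v = 1) (h₃ : indexRel s r H₃ v = 1)
    (hu : indexRel s r (H₁ ∪ H₃) v = 0) :
    (∃ e f : E, e ≠ f ∧ s e = v ∧ s f = v ∧
      r e ∈ H₁ \ H₃ ∧ r f ∈ H₃ \ H₁ ∧
      (∀ g : E, s g = v → g ≠ e → g ≠ f → r g ∈ H₁ ∩ H₃)) ∧
    Forked s r v := by
  obtain ⟨e, he, heH₃, hH₃⟩ := exists_edge_of_indexRel_eq_one h₃
  obtain ⟨f, hf, hfH₁, hH₁⟩ := exists_edge_of_indexRel_eq_one h₁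
  have hcover : ∀ g, s g = v → r g ∈ H₁ ∪ H₃ := fun g hg =>
    range_mem_of_indexRel_eq_zero Set.subset_union_left (h₁ ▸ one_ne_zero) hu hg
  have heH₁ : r e ∈ H₁ := (hcover e he).resolve_right heH₃
  have hfH₃ : r f ∈ H₃ := (hcover f hf).resolve_left hfH₁
  have hef : e ≠ f := by
    rintro rfl
    exact hfH₁ heH₁
  exact ⟨⟨e, f, hef, he, hf, ⟨heH₁, heH₃⟩, ⟨hfH₃, hfH₁⟩,
      fun g hg hge hgf => ⟨hH₁ g hg hgf, hH₃ g hg hge⟩⟩,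
    forked_of_hereditary hh₃ hh₁ hef he hf heH₃ hH₃ hfH₁ hH₁⟩
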